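/- arXiv:2007.09966 — 4 statements merged into one kernel-verified Lean document; each statement's English description precedes it below -/
import Mathlib

section
/- Let (M_k) be a martingale with M_0 = 0 whose differences M_k − M_{k−1} are centered Poisson increments Z_k − Λγ_k with Z_k | F_{k−1} ~ Poisson(Λγ_k) and γ_k ∈ [0,1] F_{k−1}-measurable. Then for any η > 0, P(M_n > η) ≤ exp( −η² / (2Λ Σ_{k=1}^n γ_k + 2 max{1,Λ} η) ). -/
/-!
For every `t`, the exponential `exp (∑_{k ≤ n} (t Z_k - Λ γ_k (e^t - 1)))` has expectation one:
conditioning on `F_{n-1}` and using the Poisson moment generating function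
`E[e^{t Z_n} | F_{n-1}] = exp (Λ γ_n (e^t - 1))` peels off the last factor. Markov's inequality
then gives `P(M_n > η) ≤ exp (-t η + Λ G (e^t - 1 - t))`, and for `t = η / (Λ G + max 1 Λ · η) ≤ 1`
the inequality `(1 - t)(e^t - 1 - t) ≤ t² / 2` turns the exponent into `-η² / (2 Λ G + 2 max 1 Λ · η)`.
-/

open MeasureTheory ProbabilityTheory Real
open scoped ENNReal NNReal Nat

lemma hasSum_pow_div_factorial_exp (x : ℝ) : HasSum (fun n : ℕ => x ^ n / n !) (exp x) := by
  rw [exp_eq_exp_ℝ]; exact NormedSpace.expSeries_div_hasSum_exp x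

lemma one_sub_mul_exp_sub_one_sub_le {t : ℝ} (ht₀ : 0 ≤ t) (ht₁ : t ≤ 1) :
    (1 - t) * (exp t - 1 - t) ≤ t ^ 2 / 2 := by
  rcases ht₁.eq_or_lt with rfl | ht₁
  · norm_num
  have hexp : HasSum (fun m : ℕ => t ^ (m + 2) / (m + 2)!) (exp t - 1 - t) := by
    simpa [Finset.sum_range_succ, sub_sub] using
      (hasSum_nat_add_iff' 2).mpr (hasSum_pow_div_factorial_exp t)
  have hgeom : HasSum (fun m : ℕ => t ^ (m + 2) / 2) (t ^ 2 * (1 - t)⁻¹ / 2) := by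
    have h := (hasSum_geometric_of_lt_one ht₀ ht₁).mul_left (t ^ 2 / 2)
    simp only [div_mul_eq_mul_div, ← pow_add, add_comm 2] at h
    exact h
  have hle : exp t - 1 - t ≤ t ^ 2 * (1 - t)⁻¹ / 2 := by
    refine hasSum_le (fun m => ?_) hexp hgeom
    gcongr
    exact_mod_cast Nat.le_of_dvd (Nat.factorial_pos _) (Nat.dvd_factorial two_pos (by omega))
  calc (1 - t) * (exp t - 1 - t) ≤ (1 - t) * (t ^ 2 * (1 - t)⁻¹ / 2) :=
        mul_le_mul_of_nonneg_left hle (by linarith)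
    _ = t ^ 2 / 2 := by field_simp [(by linarith : (1 : ℝ) - t ≠ 0)]

lemma poisson_chernoff_exponent_le {v b η : ℝ} (hv : 0 ≤ v) (hb : 1 ≤ b) (hη : 0 < η) :
    v * (exp (η / (v + b * η)) - 1 - η / (v + b * η)) - η / (v + b * η) * η
      ≤ -η ^ 2 / (2 * v + 2 * b * η) := by
  set d := v + b * η
  have hd : 0 < d := by positivity
  set t := η / d with ht
  have ht₀ : 0 ≤ t := by positivity
  have ht₁ : t ≤ 1 := div_le_one_of_le₀ (by nlinarith) hd.le
  have hψ : 0 ≤ exp t - 1 - t := by linarith [add_one_le_exp t]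
  have hv_le : v ≤ d * (1 - t) := by
    rw [mul_one_sub, mul_div_cancel₀ _ hd.ne']; nlinarith
  calc v * (exp t - 1 - t) - t * η ≤ d * ((1 - t) * (exp t - 1 - t)) - t * η := by
        rw [← mul_assoc]; gcongr
    _ ≤ d * (t ^ 2 / 2) - t * η := by gcongr; exact one_sub_mul_exp_sub_one_sub_le ht₀ ht₁
    _ = -η ^ 2 / (2 * v + 2 * b * η) := by
        rw [show 2 * v + 2 * b * η = 2 * d by ring, ht]; field_simp; ring

lemma lintegral_exp_mul_poissonMeasure (r : ℝ≥0) (t : ℝ) :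
    ∫⁻ j, ENNReal.ofReal (exp (t * j)) ∂poissonMeasure r
      = ENNReal.ofReal (exp (r * (exp t - 1))) := by
  have hsum : HasSum (fun j : ℕ => exp (t * j) * (exp (-r) * r ^ j / j !))
      (exp (r * (exp t - 1))) := by
    rw [show r * (exp t - 1) = -r + r * exp t by ring, exp_add]
    have h := (hasSum_pow_div_factorial_exp (r * exp t)).mul_left (exp (-r))
    simp only [mul_pow, ← exp_nat_mul, mul_div_assoc'] at h
    refine h.congr_fun fun j => ?_
    rw [mul_comm t]; ring
  rw [lintegral_countable']
  simp_rw [poissonMeasure_singleton, ← ENNReal.ofReal_mul (exp_pos _).le]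
  rw [← ENNReal.ofReal_tsum_of_nonneg (fun j => by positivity) hsum.summable, hsum.tsum_eq]

section ConditionalLaw

variable {Ω : Type*} {m mΩ : MeasurableSpace Ω} {μ : Measure Ω} {Z : Ω → ℕ}

lemma lintegral_mul_eq_of_forall_setLIntegral_eq (hm : m ≤ mΩ) {f g : Ω → ℝ≥0∞}
    (hf : Measurable[mΩ] f) (hg : Measurable[mΩ] g)
    (hfg : ∀ A, MeasurableSet[m] A → ∫⁻ ω in A, f ω ∂μ = ∫⁻ ω in A, g ω ∂μ)
    {W : Ω → ℝ≥0∞} (hW : Measurable[m] W) :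
    ∫⁻ ω, W ω * f ω ∂μ = ∫⁻ ω, W ω * g ω ∂μ := by
  have htrim : (μ.withDensity f).trim hm = (μ.withDensity g).trim hm := by
    refine @Measure.ext Ω m _ _ fun A hA => ?_
    rw [trim_measurableSet_eq hm hA, trim_measurableSet_eq hm hA,
      withDensity_apply _ (hm A hA), withDensity_apply _ (hm A hA), hfg A hA]
  have hW' : Measurable[mΩ] W := hW.mono hm le_rfl
  calc ∫⁻ ω, W ω * f ω ∂μ = ∫⁻ ω, W ω ∂μ.withDensity f := by
        rw [lintegral_withDensity_eq_lintegral_mul _ hf hW']; simp_rw [Pi.mul_apply, mul_comm]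
    _ = ∫⁻ ω, W ω ∂μ.withDensity g := by
        rw [← lintegral_trim hm hW, htrim, lintegral_trim hm hW]
    _ = ∫⁻ ω, W ω * g ω ∂μ := by
        rw [lintegral_withDensity_eq_lintegral_mul _ hg hW']; simp_rw [Pi.mul_apply, mul_comm]

variable {ν : Ω → Measure ℕ} [∀ ω, IsProbabilityMeasure (ν ω)]

lemma measure_inter_preimage_singleton_eq_setLIntegral (hm : m ≤ mΩ) [IsFiniteMeasure μ]
    (hZ : Measurable[mΩ] Z) (hν : ∀ j, Measurable[mΩ] fun ω => ν ω {j})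
    (hcond : ∀ j, μ⟦Z ⁻¹' {j} | m⟧ =ᵐ[μ] fun ω => (ν ω {j}).toReal)
    (j : ℕ) {A : Set Ω} (hA : MeasurableSet[m] A) :
    μ (A ∩ Z ⁻¹' {j}) = ∫⁻ ω in A, ν ω {j} ∂μ := by
  have hZj : MeasurableSet[mΩ] (Z ⁻¹' {j}) := hZ (measurableSet_singleton j)
  have hfin : ∫⁻ ω in A, ν ω {j} ∂μ ≠ ∞ :=
    ne_top_of_le_ne_top (measure_ne_top μ A)
      ((lintegral_mono fun ω => prob_le_one).trans_eq (setLIntegral_one A))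
  rw [← ENNReal.toReal_eq_toReal_iff' (measure_ne_top _ _) hfin]
  calc (μ (A ∩ Z ⁻¹' {j})).toReal
      = ∫ ω in A, (Z ⁻¹' {j}).indicator (fun _ => (1 : ℝ)) ω ∂μ := by
        rw [setIntegral_indicator hZj]; simp [measureReal_def]
    _ = ∫ ω in A, (μ⟦Z ⁻¹' {j} | m⟧) ω ∂μ :=
        (setIntegral_condExp hm ((integrable_const 1).indicator hZj) hA).symm
    _ = ∫ ω in A, (ν ω {j}).toReal ∂μ :=
        setIntegral_congr_ae (hm A hA) (by filter_upwards [hcond j] with ω h _ using h)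
    _ = (∫⁻ ω in A, ν ω {j} ∂μ).toReal :=
        integral_toReal (hν j).aemeasurable (ae_of_all _ fun ω => measure_lt_top _ _)

lemma setLIntegral_comp_eq_setLIntegral_lintegral (hm : m ≤ mΩ) [IsFiniteMeasure μ]
    (hZ : Measurable[mΩ] Z) (hν : ∀ j, Measurable[mΩ] fun ω => ν ω {j})
    (hcond : ∀ j, μ⟦Z ⁻¹' {j} | m⟧ =ᵐ[μ] fun ω => (ν ω {j}).toReal)
    (f : ℕ → ℝ≥0∞) {A : Set Ω} (hA : MeasurableSet[m] A) :
    ∫⁻ ω in A, f (Z ω) ∂μ = ∫⁻ ω in A, ∫⁻ j, f j ∂ν ω ∂μ := by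
  calc ∫⁻ ω in A, f (Z ω) ∂μ = ∫⁻ j, f j ∂(μ.restrict A).map Z :=
        (lintegral_map (measurable_from_nat (f := f)) hZ).symm
    _ = ∑' j, f j * ∫⁻ ω in A, ν ω {j} ∂μ := by
        rw [lintegral_countable']
        congr! 2 with j
        rw [Measure.map_apply hZ (measurableSet_singleton j),
          Measure.restrict_apply (hZ (measurableSet_singleton j)), Set.inter_comm,
          measure_inter_preimage_singleton_eq_setLIntegral hm hZ hν hcond j hA]
    _ = ∫⁻ ω in A, ∑' j, f j * ν ω {j} ∂μ := by
        rw [lintegral_tsum fun j => ((hν j).const_mul _).aemeasurable]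
        simp_rw [lintegral_const_mul _ (hν _)]
    _ = ∫⁻ ω in A, ∫⁻ j, f j ∂ν ω ∂μ := by simp_rw [lintegral_countable']

lemma lintegral_mul_exp_mul_eq_of_condPoisson (hm : m ≤ mΩ) [IsFiniteMeasure μ]
    (hZ : Measurable[mΩ] Z) {ρ : Ω → ℝ} (hρ : Measurable[mΩ] ρ) (hρ₀ : ∀ ω, 0 ≤ ρ ω)
    (hcond : ∀ j, μ⟦Z ⁻¹' {j} | m⟧ =ᵐ[μ] fun ω => (poissonMeasure (ρ ω).toNNReal {j}).toReal)
    (t : ℝ) {W : Ω → ℝ≥0∞} (hW : Measurable[m] W) :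
    ∫⁻ ω, W ω * ENNReal.ofReal (exp (t * Z ω)) ∂μ
      = ∫⁻ ω, W ω * ENNReal.ofReal (exp (ρ ω * (exp t - 1))) ∂μ := by
  have hν : ∀ j, Measurable[mΩ] fun ω => poissonMeasure (ρ ω).toNNReal {j} := by
    simp only [poissonMeasure_singleton]; fun_prop
  refine lintegral_mul_eq_of_forall_setLIntegral_eq hm (by fun_prop) (by fun_prop)
    (fun A hA => ?_) hW
  rw [setLIntegral_comp_eq_setLIntegral_lintegral hm hZ hν hcond
    (fun j => ENNReal.ofReal (exp (t * j))) hA]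
  simp_rw [lintegral_exp_mul_poissonMeasure, Real.coe_toNNReal _ (hρ₀ _)]

end ConditionalLaw

section ExponentialMartingale

variable {Ω : Type*} {mΩ : MeasurableSpace Ω} {μ : Measure Ω} (F : Filtration ℕ mΩ)
  {Z : ℕ → Ω → ℕ} {ρ : ℕ → Ω → ℝ}

lemma measurable_sum_Icc_compensated (hZ : ∀ k, Measurable[F k] (Z k))
    (hρ : ∀ k, 1 ≤ k → Measurable[F (k - 1)] (ρ k)) (t : ℝ) (n : ℕ) :
    Measurable[F n] fun ω => ∑ k ∈ Finset.Icc 1 n, (t * Z k ω - ρ k ω * (exp t - 1)) := by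
  refine Finset.measurable_sum _ fun k hk => ?_
  obtain ⟨hk₁, hkn⟩ := Finset.mem_Icc.mp hk
  have hZk : Measurable[F n] (Z k) := (hZ k).mono (F.mono hkn) le_rfl
  have hρk : Measurable[F n] (ρ k) := (hρ k hk₁).mono (F.mono (by omega)) le_rfl
  fun_prop

lemma lintegral_exp_sum_Icc_compensated_eq_one [IsProbabilityMeasure μ]
    (hZ : ∀ k, Measurable[F k] (Z k)) (hρ : ∀ k, 1 ≤ k → Measurable[F (k - 1)] (ρ k))
    (hρ₀ : ∀ k ω, 0 ≤ ρ k ω) {n : ℕ}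
    (hcond : ∀ k, 1 ≤ k → k ≤ n → ∀ j : ℕ, μ⟦Z k ⁻¹' {j} | F (k - 1)⟧ =ᵐ[μ]
      fun ω => (poissonMeasure (ρ k ω).toNNReal {j}).toReal) (t : ℝ) :
    ∫⁻ ω, ENNReal.ofReal (exp (∑ k ∈ Finset.Icc 1 n, (t * Z k ω - ρ k ω * (exp t - 1)))) ∂μ
      = 1 := by
  induction n with
  | zero => simp
  | succ n ih =>
    set S := fun ω => ∑ k ∈ Finset.Icc 1 n, (t * Z k ω - ρ k ω * (exp t - 1))
    set W := fun ω => ENNReal.ofReal (exp (S ω - ρ (n + 1) ω * (exp t - 1)))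
    have hρn : Measurable[F n] (ρ (n + 1)) := hρ (n + 1) (by omega)
    have hW : Measurable[F n] W := by
      have := measurable_sum_Icc_compensated F hZ hρ t n
      fun_prop
    have hstep := lintegral_mul_exp_mul_eq_of_condPoisson (F.le n)
      ((hZ (n + 1)).mono (F.le _) le_rfl) (hρn.mono (F.le n) le_rfl) (hρ₀ (n + 1))
      (hcond (n + 1) (by omega) le_rfl) t hW
    calc ∫⁻ ω, ENNReal.ofReal (exp (∑ k ∈ Finset.Icc 1 (n + 1),
          (t * Z k ω - ρ k ω * (exp t - 1)))) ∂μ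
        = ∫⁻ ω, W ω * ENNReal.ofReal (exp (t * Z (n + 1) ω)) ∂μ := by
          refine lintegral_congr fun ω => ?_
          rw [Finset.sum_Icc_succ_top (by omega), ← ENNReal.ofReal_mul (exp_pos _).le,
            ← exp_add]
          congr 2
          simp only [S]
          ring
      _ = ∫⁻ ω, W ω * ENNReal.ofReal (exp (ρ (n + 1) ω * (exp t - 1))) ∂μ := hstep
      _ = ∫⁻ ω, ENNReal.ofReal (exp (S ω)) ∂μ := by
          refine lintegral_congr fun ω => ?_
          rw [← ENNReal.ofReal_mul (exp_pos _).le, ← exp_add, sub_add_cancel]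
      _ = 1 := ih fun k hk₁ hkn => hcond k hk₁ (by omega)

end ExponentialMartingale

lemma measure_le_le_exp_neg_of_lintegral_exp_le_one {Ω : Type*} {mΩ : MeasurableSpace Ω}
    {μ : Measure Ω} {X : Ω → ℝ} (hX : AEMeasurable X μ)
    (h : ∫⁻ ω, ENNReal.ofReal (exp (X ω)) ∂μ ≤ 1) (a : ℝ) :
    μ {ω | a ≤ X ω} ≤ ENNReal.ofReal (exp (-a)) := by
  have hmarkov := mul_meas_ge_le_lintegral₀ (μ := μ)
    (measurable_exp.comp_aemeasurable hX).ennreal_ofReal (ENNReal.ofReal (exp a))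
  calc μ {ω | a ≤ X ω} ≤ μ {ω | ENNReal.ofReal (exp a) ≤ ENNReal.ofReal (exp (X ω))} :=
        measure_mono fun ω hω => ENNReal.ofReal_le_ofReal (exp_le_exp.mpr hω)
    _ ≤ (ENNReal.ofReal (exp a))⁻¹ :=
        ENNReal.le_inv_iff_mul_le.mpr (by rw [mul_comm]; exact hmarkov.trans h)
    _ = ENNReal.ofReal (exp (-a)) := by rw [← ENNReal.ofReal_inv_of_pos (exp_pos a), exp_neg]

/-- Let M_n = Σ_{k=1}^n (Z_k − Λγ_k) where, conditionally on F_{k−1},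
Z_k ~ Poisson(Λγ_k) with γ_k ∈ [0,1] F_{k−1}-measurable. Then for any η > 0,
P(M_n > η) ≤ exp(−η² / (2Λ Σ_{k=1}^n γ_k + 2 max{1,Λ} η)). -/
theorem stmt_2 {Ω : Type*} {mΩ : MeasurableSpace Ω} (μ : Measure Ω) [IsProbabilityMeasure μ]
    (F : Filtration ℕ mΩ) (Λ : ℝ) (hΛ : 0 ≤ Λ) (n : ℕ)
    (Z : ℕ → Ω → ℕ) (γ : ℕ → Ω → ℝ) (G : ℝ)
    (hZmeas : ∀ k, Measurable[F k] (Z k))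
    (hγmeas : ∀ k, 1 ≤ k → Measurable[F (k - 1)] (γ k))
    (hγ : ∀ k ω, 0 ≤ γ k ω ∧ γ k ω ≤ 1)
    -- conditionally on F_{k−1}, Z_k has a Poisson distribution with mean Λ γ_k
    (hcond : ∀ k, 1 ≤ k → k ≤ n → ∀ s : Set ℕ, MeasurableSet s →
      (μ⟦Z k ⁻¹' s | F (k - 1)⟧) =ᵐ[μ]
        fun ω => ((poissonMeasure (Real.toNNReal (Λ * γ k ω))) s).toReal)
    -- Σ_{k=1}^n γ_k equals G (so the stated bound is well defined)
    (hG : ∀ᵐ ω ∂μ, (∑ k ∈ Finset.Icc 1 n, γ k ω) = G)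
    (η : ℝ) (hη : 0 < η) :
    μ {ω | (∑ k ∈ Finset.Icc 1 n, ((Z k ω : ℝ) - Λ * γ k ω)) > η} ≤
      ENNReal.ofReal (Real.exp (-η ^ 2 / (2 * Λ * G + 2 * max 1 Λ * η))) := by
  have hG₀ : 0 ≤ G := by
    obtain ⟨ω, hω⟩ := hG.exists
    exact hω ▸ Finset.sum_nonneg fun k _ => (hγ k ω).1
  set t := η / (Λ * G + max 1 Λ * η)
  have ht : 0 ≤ t := by positivity
  set X := fun ω => ∑ k ∈ Finset.Icc 1 n, (t * Z k ω - Λ * γ k ω * (exp t - 1))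
  have hΛγ : ∀ k, 1 ≤ k → Measurable[F (k - 1)] fun ω => Λ * γ k ω :=
    fun k hk => (hγmeas k hk).const_mul Λ
  have hX : ∫⁻ ω, ENNReal.ofReal (exp (X ω)) ∂μ = 1 :=
    lintegral_exp_sum_Icc_compensated_eq_one F hZmeas hΛγ (fun k ω => mul_nonneg hΛ (hγ k ω).1)
      (fun k hk₁ hkn j => hcond k hk₁ hkn {j} (measurableSet_singleton j)) t
  have htail : {ω | (∑ k ∈ Finset.Icc 1 n, ((Z k ω : ℝ) - Λ * γ k ω)) > η}
      ≤ᵐ[μ] {ω | t * η - Λ * G * (exp t - 1 - t) ≤ X ω} := by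
    filter_upwards [hG] with ω hω hM
    have hXω : X ω = t * ∑ k ∈ Finset.Icc 1 n, ((Z k ω : ℝ) - Λ * γ k ω)
        - Λ * (∑ k ∈ Finset.Icc 1 n, γ k ω) * (exp t - 1 - t) := by
      simp only [X, Finset.mul_sum, Finset.sum_mul, ← Finset.sum_sub_distrib]
      exact Finset.sum_congr rfl fun k _ => by ring
    change t * η - _ ≤ X ω
    rw [hXω, hω]
    gcongr
    exact le_of_lt hM
  calc μ {ω | (∑ k ∈ Finset.Icc 1 n, ((Z k ω : ℝ) - Λ * γ k ω)) > η}
      ≤ μ {ω | t * η - Λ * G * (exp t - 1 - t) ≤ X ω} := measure_mono_ae htail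
    _ ≤ ENNReal.ofReal (exp (-(t * η - Λ * G * (exp t - 1 - t)))) :=
        measure_le_le_exp_neg_of_lintegral_exp_le_one
          ((measurable_sum_Icc_compensated F hZmeas hΛγ t n).mono (F.le n) le_rfl).aemeasurable
          hX.le _
    _ ≤ ENNReal.ofReal (exp (-η ^ 2 / (2 * Λ * G + 2 * max 1 Λ * η))) := by
        have := poisson_chernoff_exponent_le (mul_nonneg hΛ hG₀) (le_max_left 1 Λ) hη
        rw [mul_assoc 2 Λ G]
        gcongr
        linarith
end

section
/- Let m, λ_max, γ_min > 0, T ≥ 2, ℓ > 0, and suppose G := Σᵢ γ(b_{τᵢ}) satisfies mℓ ≤ 6 max{1,λ_max} log(T)/G + sqrt(6 λ_max log(T)/G). Then G ≤ 12 max{1,λ_max} log(T)/(mℓ) + 6 λ_max log(T)/(m²ℓ²), and hence the number of terms |V| satisfies |V| ≤ (12 max{1,λ_max} log(T)/(mℓ) + 6 λ_max log(T)/(m²ℓ²))/γ_min whenever each γ(b_{τᵢ}) ≥ γ_min. -/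
/-! Clearing the denominator, `c ≤ A / G + √(B / G)` says `c G - A ≤ √(B G)`. Either `c G ≤ A`, or
squaring gives `c² G² - 2 A c G ≤ B G`; in both cases `c² G ≤ 2 A c + B`, which is the bound on `G`.
The bound on the number of terms follows since each term is at least `γ_min`. -/

theorem sq_mul_le_of_le_div_add_sqrt_div {A B c G : ℝ} (hB : 0 ≤ B) (hc : 0 < c) (hG : 0 < G)
    (h : c ≤ A / G + √(B / G)) : c ^ 2 * G ≤ 2 * A * c + B := by
  set s := √(B / G)
  have hs : 0 ≤ s := Real.sqrt_nonneg _
  have hs_sq : G * s ^ 2 = B := by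
    rw [Real.sq_sqrt (div_nonneg hB hG.le)]
    field_simp
  have hcG : c * G - A ≤ G * s := by
    have := mul_le_mul_of_nonneg_left h hG.le
    rw [mul_add, mul_div_cancel₀ _ hG.ne'] at this
    linarith
  rcases le_or_gt (c * G) A with hle | hgt
  · nlinarith [mul_pos hc hG]
  · have hsq : (c * G - A) ^ 2 ≤ G * B := by
      rw [← hs_sq]
      nlinarith
    nlinarith [sq_nonneg A]

theorem le_two_mul_div_add_div_sq_of_le_div_add_sqrt_div {A B c G : ℝ} (hB : 0 ≤ B) (hc : 0 < c)
    (hG : 0 < G) (h : c ≤ A / G + √(B / G)) : G ≤ 2 * A / c + B / c ^ 2 := by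
  have hsplit : 2 * A / c + B / c ^ 2 = (2 * A * c + B) / c ^ 2 := by
    field_simp
  rw [hsplit, le_div_iff₀ (by positivity), mul_comm]
  exact sq_mul_le_of_le_div_add_sqrt_div hB hc hG h

/-- If G = Σ_{i<V} γᵢ with γ_min ≤ γᵢ ≤ 1 satisfies
mℓ ≤ 6 max{1,λ_max} log(T)/G + sqrt(6 λ_max log(T)/G), then
G ≤ 12 max{1,λ_max} log(T)/(mℓ) + 6 λ_max log(T)/(m²ℓ²), and
V ≤ (12 max{1,λ_max} log(T)/(mℓ) + 6 λ_max log(T)/(m²ℓ²))/γ_min. -/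
theorem stmt_9 (m lamMax T ℓ γmin : ℝ) (V : ℕ) (g : ℕ → ℝ)
    (hm : 0 < m) (hlam : 0 < lamMax) (hγmin : 0 < γmin) (hT : 2 ≤ T) (hℓ : 0 < ℓ)
    (hg : ∀ i < V, γmin ≤ g i ∧ g i ≤ 1)
    (hGpos : 0 < ∑ i ∈ Finset.range V, g i)
    (hdiv : m * ℓ ≤ 6 * max 1 lamMax * Real.log T / (∑ i ∈ Finset.range V, g i) +
      Real.sqrt (6 * lamMax * Real.log T / (∑ i ∈ Finset.range V, g i))) :
    (∑ i ∈ Finset.range V, g i) ≤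
        12 * max 1 lamMax * Real.log T / (m * ℓ) + 6 * lamMax * Real.log T / (m ^ 2 * ℓ ^ 2) ∧
    (V : ℝ) ≤ (12 * max 1 lamMax * Real.log T / (m * ℓ) +
        6 * lamMax * Real.log T / (m ^ 2 * ℓ ^ 2)) / γmin := by
  have hlog : 0 ≤ Real.log T := Real.log_nonneg (by linarith)
  have hG_le : (∑ i ∈ Finset.range V, g i) ≤
      12 * max 1 lamMax * Real.log T / (m * ℓ) + 6 * lamMax * Real.log T / (m ^ 2 * ℓ ^ 2) := by
    convert le_two_mul_div_add_div_sq_of_le_div_add_sqrt_div (by positivity) (by positivity)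
      hGpos hdiv using 2 <;> ring
  have hV_mul_le : (V : ℝ) * γmin ≤ ∑ i ∈ Finset.range V, g i := by
    simpa using Finset.card_nsmul_le_sum (Finset.range V) g γmin
      fun i hi => (hg i (Finset.mem_range.mp hi)).1
  exact ⟨hG_le, (le_div_iff₀ hγmin).mpr (hV_mul_le.trans hG_le)⟩
end

section
/- For all x > 0 and 0 < a < 1, the inequality 2ax + 2a² log(a/(a+x)) ≤ x² holds. -/
/-! With `t = x / a`, the bound `log (1 + t) ≥ 2t / (t + 2)` gives
`2 a² log (a / (a + x)) ≤ -4 a² x / (x + 2a)`, so the left-hand side is at most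
`2 a x² / (x + 2a) ≤ x²`. -/

open Real

lemma Real.log_div_add_le {a x : ℝ} (ha : 0 < a) (hx : 0 ≤ x) :
    log (a / (a + x)) ≤ -(2 * x / (x + 2 * a)) := by
  have hlog : log (a / (a + x)) = -log (1 + x / a) := by
    rw [← log_inv]
    congr 1
    field_simp
  have hfrac : 2 * (x / a) / (x / a + 2) = 2 * x / (x + 2 * a) := by
    field_simp
  rw [hlog, neg_le_neg_iff, ← hfrac]
  exact le_log_one_add_of_nonneg (div_nonneg hx ha.le)

theorem stmt_12_general (a x : ℝ) (ha : 0 < a) (hx : 0 < x) :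
    2 * a * x + 2 * a ^ 2 * Real.log (a / (a + x)) ≤ x ^ 2 := by
  have hpos : 0 < x + 2 * a := by linarith
  calc 2 * a * x + 2 * a ^ 2 * log (a / (a + x))
      ≤ 2 * a * x + 2 * a ^ 2 * -(2 * x / (x + 2 * a)) := by
        gcongr
        exact log_div_add_le ha hx.le
    _ = 2 * a * x ^ 2 / (x + 2 * a) := by
        field_simp
        ring
    _ ≤ x ^ 2 := by
        rw [div_le_iff₀ hpos]
        nlinarith [sq_nonneg x]

/-- For all x > 0 and 0 < a < 1,
2ax + 2a² log(a/(a+x)) ≤ x². -/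
theorem stmt_12 (a x : ℝ) (ha : 0 < a) (ha1 : a < 1) (hx : 0 < x) :
    2 * a * x + 2 * a ^ 2 * Real.log (a / (a + x)) ≤ x ^ 2 :=
  stmt_12_general a x ha hx
end

section
/- Fix m > 0, ε ∈ (0, 1/2], x* ∈ [ε, 1−ε], and γ: [0,1] → (0,1] differentiable, nonincreasing, with −γ′(x) ≥ γ(x). Define Λ(x) = (1/γ(x))·mε(1 + ε − |x − x*|) for |x − x*| ≤ ε and Λ(x) = (1/γ(x))·min(mx, mε) otherwise. Then Λ is nondecreasing on [0,1]. -/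
/-!
The function is `ν / γ` with `ν` the bump reward. On `[0, x*]` both `ν` and `1 / γ` are
nonnegative and nondecreasing, and on `[x* + ε, 1]` the reward is the constant `mε`. On
`[x*, x* + ε]` the reward is `mε (c - x)` with `c - x ≥ 1`, and the derivative of `(c - x) / γ`
has numerator `(c - x)(-γ') - γ ≥ (c - x - 1) γ ≥ 0`.
-/

open Set

noncomputable def bumpReward (m ε xstar x : ℝ) : ℝ :=
  if |x - xstar| ≤ ε then m * ε * (1 + ε - |x - xstar|) else min (m * x) (m * ε)

section bumpReward

variable {m ε xstar x : ℝ}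

lemma bumpReward_nonneg (hm : 0 ≤ m) (hε : 0 ≤ ε) (hx : 0 ≤ x) :
    0 ≤ bumpReward m ε xstar x := by
  unfold bumpReward
  split_ifs with h
  · exact mul_nonneg (mul_nonneg hm hε) (by linarith)
  · exact le_min (mul_nonneg hm hx) (mul_nonneg hm hε)

lemma bumpReward_monotoneOn_Iic (hm : 0 ≤ m) (hε : 0 ≤ ε) :
    MonotoneOn (bumpReward m ε xstar) (Iic xstar) := by
  intro a (ha : a ≤ xstar) b (hb : b ≤ xstar) hab
  have hme : 0 ≤ m * ε := mul_nonneg hm hε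
  simp only [bumpReward, abs_sub_comm _ xstar, abs_of_nonneg (sub_nonneg.2 ha),
    abs_of_nonneg (sub_nonneg.2 hb)]
  split_ifs with hεa hεb hεb
  · exact mul_le_mul_of_nonneg_left (by linarith) hme
  · exact absurd (by linarith) hεb
  · calc min (m * a) (m * ε) ≤ m * ε := min_le_right _ _
      _ ≤ m * ε * (1 + ε - (xstar - b)) := le_mul_of_one_le_right hme (by linarith)
  · exact min_le_min_right _ (mul_le_mul_of_nonneg_left hab hm)

lemma bumpReward_of_mem_Icc (hx : x ∈ Icc xstar (xstar + ε)) :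
    bumpReward m ε xstar x = m * ε * (1 + ε + xstar - x) := by
  rw [bumpReward, abs_of_nonneg (sub_nonneg.2 hx.1), if_pos (by linarith [hx.2])]
  ring

lemma bumpReward_of_le (hm : 0 ≤ m) (hxstar : 0 ≤ xstar) (hx : xstar + ε ≤ x) :
    bumpReward m ε xstar x = m * ε := by
  unfold bumpReward
  split_ifs with h
  · rw [le_antisymm h (by linarith [le_abs_self (x - xstar)])]
    ring
  · exact min_eq_right (mul_le_mul_of_nonneg_left (by linarith) hm)

end bumpReward

lemma MonotoneOn.Icc_union_Icc {f : ℝ → ℝ} {a b c : ℝ} (hab : a ≤ b) (hbc : b ≤ c)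
    (h₁ : MonotoneOn f (Icc a b)) (h₂ : MonotoneOn f (Icc b c)) : MonotoneOn f (Icc a c) := by
  rw [← Icc_union_Icc_eq_Icc hab hbc]
  exact h₁.union_right h₂ (isGreatest_Icc hab) (isLeast_Icc hbc)

lemma monotoneOn_sub_div_of_le_neg_deriv {γ γ' : ℝ → ℝ} {a b c : ℝ} (hbc : b + 1 ≤ c)
    (hγ : ∀ x ∈ Icc a b, HasDerivWithinAt γ (γ' x) (Icc a b) x)
    (hpos : ∀ x ∈ Icc a b, 0 < γ x) (hγ' : ∀ x ∈ Icc a b, γ x ≤ -γ' x) :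
    MonotoneOn (fun x => (c - x) / γ x) (Icc a b) := by
  refine monotoneOn_of_hasDerivWithinAt_nonneg
    (f' := fun x => (-1 * γ x - (c - x) * γ' x) / γ x ^ 2) (convex_Icc a b)
    ((continuousOn_const.sub continuousOn_id).div (fun x hx => (hγ x hx).continuousWithinAt)
      fun x hx => (hpos x hx).ne') ?_ ?_ <;> rw [interior_Icc] <;> intro x hx <;>
    have hx' := Ioo_subset_Icc_self hx
  · exact (((hasDerivWithinAt_id x _).const_sub c).div (hγ x hx') (hpos x hx').ne').mono
      Ioo_subset_Icc_self
  · have hcx : 1 ≤ c - x := by linarith [hx.2]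
    have hγx := hpos x hx'
    have : (c - x) * γ x ≤ (c - x) * -γ' x :=
      mul_le_mul_of_nonneg_left (hγ' x hx') (by linarith)
    apply div_nonneg _ (sq_nonneg _)
    nlinarith

/-- With m > 0, ε ∈ (0,1/2], x* ∈ [ε, 1−ε], γ : [0,1] → (0,1]
differentiable, nonincreasing, with −γ′ ≥ γ, the CIF
Λ(x) = (1/γ(x))·mε(1+ε−|x−x*|) for |x−x*| ≤ ε and (1/γ(x))·min(mx, mε) otherwise
is nondecreasing on [0,1]. -/
theorem stmt_17 (m ε xstar : ℝ) (γ : ℝ → ℝ) (γ' : ℝ → ℝ)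
    (hm : 0 < m) (hε : 0 < ε ∧ ε ≤ 1/2) (hx : ε ≤ xstar ∧ xstar ≤ 1 - ε)
    (hdiff : ∀ x ∈ Set.Icc (0:ℝ) 1, HasDerivWithinAt γ (γ' x) (Set.Icc 0 1) x)
    (hpos : ∀ x ∈ Set.Icc (0:ℝ) 1, 0 < γ x ∧ γ x ≤ 1)
    (hmono : AntitoneOn γ (Set.Icc 0 1))
    (hcond : ∀ x ∈ Set.Icc (0:ℝ) 1, -γ' x ≥ γ x) :
    MonotoneOn (fun x =>
      if |x - xstar| ≤ ε then (1 / γ x) * (m * ε * (1 + ε - |x - xstar|))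
      else (1 / γ x) * min (m * x) (m * ε)) (Set.Icc 0 1) := by
  have hxstar : 0 ≤ xstar := hε.1.le.trans hx.1
  have hme : 0 ≤ m * ε := mul_nonneg hm.le hε.1.le
  have hsub₁ : Icc 0 xstar ⊆ Icc 0 1 := Icc_subset_Icc_right (by linarith)
  have hsub₂ : Icc xstar (xstar + ε) ⊆ Icc 0 1 := Icc_subset_Icc hxstar (by linarith)
  have hsub₃ : Icc (xstar + ε) 1 ⊆ Icc 0 1 := Icc_subset_Icc (by linarith) le_rfl
  have hinv : MonotoneOn (fun x => 1 / γ x) (Icc 0 1) := fun a ha b hb hab =>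
    one_div_le_one_div_of_le (hpos b hb).1 (hmono ha hb hab)
  have hΛ : (fun x => if |x - xstar| ≤ ε then (1 / γ x) * (m * ε * (1 + ε - |x - xstar|))
      else (1 / γ x) * min (m * x) (m * ε)) = fun x => 1 / γ x * bumpReward m ε xstar x := by
    funext x
    exact (mul_ite _ _ _ _).symm
  rw [hΛ]
  refine .Icc_union_Icc (b := xstar + ε) (by linarith) (by linarith)
    (.Icc_union_Icc (b := xstar) hxstar (by linarith) ?_ ?_) ?_
  · exact (hinv.mono hsub₁).mul
      ((bumpReward_monotoneOn_Iic hm.le hε.1.le).mono Icc_subset_Iic_self)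
      (fun x hx => (one_div_pos.2 (hpos x (hsub₁ hx)).1).le)
      fun x hx => bumpReward_nonneg hm.le hε.1.le hx.1
  · have hquot := monotoneOn_sub_div_of_le_neg_deriv (c := 1 + ε + xstar) (by linarith)
      (fun x hx => (hdiff x (hsub₂ hx)).mono hsub₂) (fun x hx => (hpos x (hsub₂ hx)).1)
      fun x hx => hcond x (hsub₂ hx)
    refine MonotoneOn.congr (fun a ha b hb hab => mul_le_mul_of_nonneg_left (hquot ha hb hab) hme)
      fun x hx => ?_
    simp only [bumpReward_of_mem_Icc hx]
    ring
  · refine MonotoneOn.congr (fun a ha b hb hab =>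
      mul_le_mul_of_nonneg_right (hinv (hsub₃ ha) (hsub₃ hb) hab) hme) fun x hx => ?_
    simp only [bumpReward_of_le hm.le hxstar hx.1]
end
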